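/- arXiv:1407.7464 — 4 statements merged into one kernel-verified Lean document; each statement's English description precedes it below -/
import Mathlib

section
/- Suppose the allocation rule a is monotonic. If the incentive compatibility constraints hold for (i) over-reporting cost with the same duration: p_{c,d} - c·a_{c,d} ≥ p_{c',d} - c·a_{c',d} for c' > c, and (iii) under-reporting duration with the same cost: p_{c,d} - c·a_{c,d} ≥ p_{c,d'} - c·a_{c,d'} for d' < d, then the joint constraint of over-reporting cost and under-reporting duration also holds: p_{c,d} - c·a_{c,d} ≥ p_{c',d'} - c·a_{c',d'} for all c' > c and d' < d. -/
/-- With a monotonic allocation rule, IC for over-reporting cost (same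
duration) and IC for under-reporting duration (same cost) imply the joint constraint
for simultaneously over-reporting cost and under-reporting duration. -/
theorem stmt_1 (a p : ℕ → ℕ → ℝ)
    (hmono : ∀ c c' d d', c ≤ c' → d' ≤ d → a c d ≥ a c' d')
    (hIC1 : ∀ c c' d, c < c' → p c d - (c : ℝ) * a c d ≥ p c' d - (c : ℝ) * a c' d)
    (hIC3 : ∀ c d d', d' < d → p c d - (c : ℝ) * a c d ≥ p c d' - (c : ℝ) * a c d') :
    ∀ c c' d d', c < c' → d' < d →
      p c d - (c : ℝ) * a c d ≥ p c' d' - (c : ℝ) * a c' d' := by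
  intro c c' d d' hc hd
  have h1 := hIC1 c c' d hc
  have h3 := hIC3 c' d d' hd
  have hm : a c' d ≥ a c' d' := hmono c' c' d d' le_rfl hd.le
  have hcc : (c : ℝ) ≤ (c' : ℝ) := by exact_mod_cast hc.le
  nlinarith [hm, hcc, Nat.cast_nonneg (α := ℝ) c]
end

section
/- (Monotonic implies IC) If the allocation rule a is monotonic ((c,d) ⪰ (c',d') implies a_{c,d} ≥ a_{c',d'}), then together with the payment rule p_{c,d} = c·a_{c,d} + Σ_{k=c+1}^{c_max} a_{k,d}, the mechanism is Bayesian incentive compatible: for every type (c,d) and every possible misreport (c',d') with (c,d) ≠ (c',d') and d' ≤ d, we have p_{c,d} - c·a_{c,d} ≥ p_{c',d'} - c·a_{c',d'}. -/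
/-- Monotonic allocation implies Bayesian incentive compatibility under
the optimal payment rule, for every misreport with d' ≤ d. -/
theorem stmt_12 (cmin cmax dmin dmax : ℕ) (a p : ℕ → ℕ → ℝ)
    (hbounds : ∀ c d, 0 ≤ a c d ∧ a c d ≤ 1)
    (hmono : ∀ c c' d d', c ≤ c' → d' ≤ d → a c d ≥ a c' d')
    (hp : ∀ c d, p c d = (c : ℝ) * a c d + ∑ k ∈ Finset.Icc (c + 1) cmax, a k d) :
    ∀ c d c' d', cmin ≤ c → c ≤ cmax → cmin ≤ c' → c' ≤ cmax →
      dmin ≤ d → d ≤ dmax → dmin ≤ d' → d' ≤ dmax →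
      (c, d) ≠ (c', d') → d' ≤ d →
      p c d - (c : ℝ) * a c d ≥ p c' d' - (c : ℝ) * a c' d' := by
  intro c d c' d' _ hc2 _ hc'2 _ _ _ _ _ hdd
  rw [hp, hp]
  simp only [Finset.Icc_add_one_left_eq_Ioc]
  have key : ∑ k ∈ Finset.Ioc c cmax, a k d ≥
      ((c' : ℝ) - c) * a c' d' + ∑ k ∈ Finset.Ioc c' cmax, a k d' := by
    rcases le_or_gt c c' with h | h
    · have hsplit : ∑ k ∈ Finset.Ioc c c', a k d' + ∑ k ∈ Finset.Ioc c' cmax, a k d'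
          = ∑ k ∈ Finset.Ioc c cmax, a k d' :=
        Finset.sum_Ioc_consecutive _ h hc'2
      have h1 : ∑ k ∈ Finset.Ioc c cmax, a k d' ≤ ∑ k ∈ Finset.Ioc c cmax, a k d :=
        Finset.sum_le_sum fun k _ => hmono k k d d' le_rfl hdd
      have h2 : (Finset.Ioc c c').card • a c' d' ≤ ∑ k ∈ Finset.Ioc c c', a k d' :=
        Finset.card_nsmul_le_sum _ _ _ fun k hk =>
          hmono k c' d' d' (Finset.mem_Ioc.mp hk).2 le_rfl
      rw [Nat.card_Ioc, nsmul_eq_mul, Nat.cast_sub h] at h2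
      linarith
    · have hsplit : ∑ k ∈ Finset.Ioc c' c, a k d' + ∑ k ∈ Finset.Ioc c cmax, a k d'
          = ∑ k ∈ Finset.Ioc c' cmax, a k d' :=
        Finset.sum_Ioc_consecutive _ h.le hc2
      have h1 : ∑ k ∈ Finset.Ioc c cmax, a k d' ≤ ∑ k ∈ Finset.Ioc c cmax, a k d :=
        Finset.sum_le_sum fun k _ => hmono k k d d' le_rfl hdd
      have h2 : ∑ k ∈ Finset.Ioc c' c, a k d' ≤ (Finset.Ioc c' c).card • a c' d' :=
        Finset.sum_le_card_nsmul _ _ _ fun k hk =>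
          hmono c' k d' d' (Finset.mem_Ioc.mp hk).1.le le_rfl
      rw [Nat.card_Ioc, nsmul_eq_mul, Nat.cast_sub h.le] at h2
      linarith
  linarith
end

section
/- In the two-path example, if path P1 consists of N nodes each with cost 0 and path P2 consists of N nodes each with cost 1, then under the per-node VCG mechanism each node of P1 is paid N (the cost of the cheapest path avoiding it, which is N, minus the cost of the rest of P1, which is 0), so the total VCG payment equals N², whereas when each path bids as a single entity, the second-price payment to the winning path P1 equals N. Hence the per-node VCG overpayment N² exceeds the path-auction payment N for all N ≥ 2. -/
/-- Two-path example: per-node VCG pays N to each of the N zero-cost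
nodes of P1 (total N²), while the path-auction second price is N; hence N² > N for
N ≥ 2. -/
theorem stmt_15 (N : ℕ) (hN : 2 ≤ N)
    (cost1 cost2 : Fin N → ℝ)
    (h1 : ∀ i, cost1 i = 0) (h2 : ∀ i, cost2 i = 1)
    (vcgPay : Fin N → ℝ)
    (hv : ∀ i, vcgPay i = (∑ j, cost2 j) - ((∑ j, cost1 j) - cost1 i))
    (pathPay : ℝ) (hpath : pathPay = ∑ j, cost2 j) :
    (∑ i, vcgPay i) = (N : ℝ) ^ 2 ∧ pathPay = (N : ℝ) ∧
      (∑ i, vcgPay i) > pathPay := by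
  have hs2 : (∑ j, cost2 j) = (N : ℝ) := by simp [h2]
  have hs1 : (∑ j, cost1 j) = 0 := by simp [h1]
  have hsum : (∑ i, vcgPay i) = (N : ℝ) ^ 2 := by
    simp [hv, hs1, hs2, h1, sq]
  have hp : pathPay = (N : ℝ) := by rw [hpath, hs2]
  refine ⟨hsum, hp, ?_⟩
  rw [hsum, hp, sq]
  have hN1 : (1 : ℝ) < N := by exact_mod_cast lt_of_lt_of_le one_lt_two hN
  nlinarith
end

section
/- (Payment monotone in duration) If the allocation a is monotonic ((c,d) ⪰ (c',d') implies a_{c,d} ≥ a_{c',d'}), then the payment p_{c,d} = c·a_{c,d} + Σ_{k=c+1}^{c_max} a_{k,d} is monotone non-decreasing in duration: d ≥ d' implies p_{c,d} ≥ p_{c,d'} for every fixed cost c. -/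
/-- If the allocation is monotonic, the optimal payment
p_{c,d} = c·a_{c,d} + Σ_{k=c+1}^{c_max} a_{k,d} is monotone non-decreasing in
duration: d ≥ d' implies p_{c,d} ≥ p_{c,d'}. -/
theorem stmt_18 (cmax : ℕ) (a p : ℕ → ℕ → ℝ)
    (hmono : ∀ c c' d d', c ≤ c' → d' ≤ d → a c d ≥ a c' d')
    (hp : ∀ c d, p c d = (c : ℝ) * a c d + ∑ k ∈ Finset.Icc (c + 1) cmax, a k d) :
    ∀ c d d', d' ≤ d → p c d ≥ p c d' := by
  intro c d d' h
  rw [hp, hp]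
  apply add_le_add
  · exact mul_le_mul_of_nonneg_left (hmono c c d d' le_rfl h) (Nat.cast_nonneg c)
  · exact Finset.sum_le_sum fun k _ => hmono k k d d' le_rfl h
end
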